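/- Let T be a bounded linear operator on a complex Hilbert space H. Then ‖T‖² ≤ ω((Re T)T) + ω((Im T)T). -/

import Mathlib

open ContinuousLinearMap

/-- The numerical radius of a bounded linear operator on a complex Hilbert space:
`ω(T) = sup_{‖x‖ = 1} |⟨Tx, x⟩|`. -/
noncomputable def numRadius {H : Type*} [NormedAddCommGroup H] [InnerProductSpace ℂ H]
    (T : H →L[ℂ] H) : ℝ :=
  ⨆ x : {x : H // ‖x‖ = 1}, ‖(inner ℂ (T x) (x : H) : ℂ)‖

/-- The real part of an operator: `Re(T) = (T + T*)/2`. -/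
noncomputable def reOp {H : Type*} [NormedAddCommGroup H] [InnerProductSpace ℂ H]
    [CompleteSpace H] (T : H →L[ℂ] H) : H →L[ℂ] H :=
  (2 : ℂ)⁻¹ • (T + adjoint T)

/-- The imaginary part of an operator: `Im(T) = (T - T*)/(2i)`. -/
noncomputable def imOp {H : Type*} [NormedAddCommGroup H] [InnerProductSpace ℂ H]
    [CompleteSpace H] (T : H →L[ℂ] H) : H →L[ℂ] H :=
  (2 * Complex.I)⁻¹ • (T - adjoint T)

/-! Since `T* = Re T - i Im T`, for a unit vector `x` the number `‖Tx‖² = ⟨T*Tx, x⟩` is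
`⟨(Re T)Tx, x⟩` plus a unimodular multiple of `⟨(Im T)Tx, x⟩`, so the triangle inequality
bounds it by `ω((Re T)T) + ω((Im T)T)`. -/

section NumRadius

variable {H : Type*} [NormedAddCommGroup H] [InnerProductSpace ℂ H]

lemma bddAbove_range_norm_inner_apply_self (S : H →L[ℂ] H) :
    BddAbove (Set.range fun x : {x : H // ‖x‖ = 1} => ‖(inner ℂ (S x) (x : H) : ℂ)‖) := by
  refine ⟨‖S‖, ?_⟩
  rintro _ ⟨⟨x, hx⟩, rfl⟩
  calc ‖(inner ℂ (S x) x : ℂ)‖ ≤ ‖S x‖ * ‖x‖ := norm_inner_le_norm _ _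
    _ ≤ ‖S‖ * ‖x‖ * ‖x‖ := by gcongr; exact S.le_opNorm x
    _ = ‖S‖ := by rw [hx, mul_one, mul_one]

lemma norm_inner_apply_self_le_numRadius (S : H →L[ℂ] H) {x : H} (hx : ‖x‖ = 1) :
    ‖(inner ℂ (S x) x : ℂ)‖ ≤ numRadius S :=
  le_ciSup (bddAbove_range_norm_inner_apply_self S) ⟨x, hx⟩

lemma numRadius_nonneg (S : H →L[ℂ] H) : 0 ≤ numRadius S :=
  Real.iSup_nonneg fun _ => norm_nonneg _

end NumRadius

section CartesianDecomposition

variable {H : Type*} [NormedAddCommGroup H] [InnerProductSpace ℂ H] [CompleteSpace H]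

lemma adjoint_eq_reOp_sub_I_smul_imOp (T : H →L[ℂ] H) :
    adjoint T = reOp T - Complex.I • imOp T := by
  rw [reOp, imOp, smul_smul, show Complex.I * (2 * Complex.I)⁻¹ = 2⁻¹ by field_simp]
  module

lemma inner_apply_self_eq_inner_reOp_comp_add_I_mul (T : H →L[ℂ] H) (x : H) :
    inner ℂ (T x) (T x) =
      inner ℂ ((reOp T ∘L T) x) x + Complex.I * inner ℂ ((imOp T ∘L T) x) x := by
  rw [← adjoint_inner_left, adjoint_eq_reOp_sub_I_smul_imOp, sub_apply, smul_apply,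
    inner_sub_left, inner_smul_left, Complex.conj_I, comp_apply, comp_apply]
  ring

lemma norm_apply_sq_le_numRadius_add (T : H →L[ℂ] H) {x : H} (hx : ‖x‖ = 1) :
    ‖T x‖ ^ 2 ≤ numRadius (reOp T ∘L T) + numRadius (imOp T ∘L T) := by
  have hsq : (‖T x‖ ^ 2 : ℝ) = ‖(inner ℂ (T x) (T x) : ℂ)‖ := by
    rw [inner_self_eq_norm_sq_to_K, norm_pow, RCLike.norm_ofReal, abs_norm]
  rw [hsq, inner_apply_self_eq_inner_reOp_comp_add_I_mul]
  calc _ ≤ ‖(inner ℂ ((reOp T ∘L T) x) x : ℂ)‖ + ‖(inner ℂ ((imOp T ∘L T) x) x : ℂ)‖ := by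
        grw [norm_add_le, norm_mul, Complex.norm_I, one_mul]
    _ ≤ _ := add_le_add (norm_inner_apply_self_le_numRadius _ hx)
        (norm_inner_apply_self_le_numRadius _ hx)

end CartesianDecomposition

theorem norm_sq_le_numRadius_re_add_numRadius_im
    {H : Type*} [NormedAddCommGroup H] [InnerProductSpace ℂ H] [CompleteSpace H]
    (T : H →L[ℂ] H) :
    ‖T‖ ^ 2 ≤ numRadius (reOp T ∘L T) + numRadius (imOp T ∘L T) := by
  rw [← Real.le_sqrt (norm_nonneg T) (add_nonneg (numRadius_nonneg _) (numRadius_nonneg _))]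
  exact opNorm_le_of_unit_norm (Real.sqrt_nonneg _) fun x hx =>
    Real.le_sqrt_of_sq_le (norm_apply_sq_le_numRadius_add T hx)
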